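/- arXiv:2104.03464 — 7 statements merged into one kernel-verified Lean document; each statement's English description precedes it below -/
import Mathlib

section
/- Let M^{p+} = {β ∈ ℝ^p : 0 ≤ β_1 ≤ β_2 ≤ ... ≤ β_p} be the positive monotone cone and let v ∈ M^{p+} have l constant pieces of lengths p_1,...,p_l (summing to p). If the first constant piece of v consists of zeros, then the tangent cone of M^{p+} at v equals the Cartesian product M^{p_1 +} × M^{p_2} × ... × M^{p_l}, where M^q is the monotone cone {x ∈ ℝ^q : x_1 ≤ ... ≤ x_q} and M^{q+} its nonnegative version; otherwise (first piece strictly positive) the tangent cone equals M^{p_1} × M^{p_2} × ... × M^{p_l}. -/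
/-!
A direction `x` lies in the tangent cone of `M^{p+}` at `v` as soon as `v + ε x ∈ M^{p+}` for
some `ε > 0`. Every defining inequality `w i ≤ w j`, `0 ≤ w i` that is strict at `v` survives a
small perturbation, so only the inequalities active at `v` constrain `x`: `x` must be monotone on
each constant piece of `v`, and nonnegative where `v` vanishes, i.e. on a zero first piece.
-/

open Filter Topology

lemma eventually_nonneg_add_mul {a b : ℝ} (ha : 0 ≤ a) (h : 0 < a ∨ 0 ≤ b) :
    ∀ᶠ ε in 𝓝[>] (0 : ℝ), 0 ≤ a + ε * b := by
  rcases h with ha | hb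
  · have hcont : Tendsto (fun ε : ℝ => a + ε * b) (𝓝 0) (𝓝 a) := by
      simpa using ((tendsto_id (x := 𝓝 (0 : ℝ))).mul_const b).const_add a
    exact nhdsWithin_le_nhds ((hcont.eventually (lt_mem_nhds ha)).mono fun _ => le_of_lt)
  · exact eventually_nhdsWithin_of_forall fun ε hε =>
      add_nonneg ha (mul_nonneg (le_of_lt hε) hb)

def nonnegMonotoneCone (ι : Type*) [Preorder ι] : Set (ι → ℝ) :=
  {w | Monotone w ∧ ∀ i, 0 ≤ w i}

section NonnegMonotoneCone

variable {ι : Type*} [Preorder ι]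

lemma eventually_add_smul_mem_nonnegMonotoneCone [Finite ι] {v x : ι → ℝ}
    (hv : v ∈ nonnegMonotoneCone ι)
    (hmono : ∀ i j, i ≤ j → v i < v j ∨ x i ≤ x j) (hpos : ∀ i, 0 < v i ∨ 0 ≤ x i) :
    ∀ᶠ ε in 𝓝[>] (0 : ℝ), v + ε • x ∈ nonnegMonotoneCone ι := by
  have hmono' : ∀ᶠ ε in 𝓝[>] (0 : ℝ), ∀ i j, i ≤ j → 0 ≤ (v j - v i) + ε * (x j - x i) :=
    eventually_all.2 fun i => eventually_all.2 fun j => eventually_imp_distrib_left.2 fun hij =>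
      eventually_nonneg_add_mul (sub_nonneg.2 (hv.1 hij))
        ((hmono i j hij).imp sub_pos.2 sub_nonneg.2)
  have hpos' : ∀ᶠ ε in 𝓝[>] (0 : ℝ), ∀ i, 0 ≤ v i + ε * x i :=
    eventually_all.2 fun i => eventually_nonneg_add_mul (hv.2 i) (hpos i)
  filter_upwards [hmono', hpos'] with ε hmonoε hposε
  refine ⟨fun i j hij => ?_, hposε⟩
  have := hmonoε i j hij
  simp only [Pi.add_apply, Pi.smul_apply, smul_eq_mul]
  linarith

lemma le_of_smul_sub_mem_nonnegMonotoneCone {v w : ι → ℝ} {t : ℝ} (ht : 0 ≤ t)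
    (hw : w ∈ nonnegMonotoneCone ι) {i j : ι} (hij : i ≤ j) (hv : v i = v j) :
    (t • (w - v)) i ≤ (t • (w - v)) j := by
  simp only [Pi.smul_apply, Pi.sub_apply, smul_eq_mul, hv]
  exact mul_le_mul_of_nonneg_left (sub_le_sub_right (hw.1 hij) _) ht

lemma nonneg_of_smul_sub_mem_nonnegMonotoneCone {v w : ι → ℝ} {t : ℝ} (ht : 0 ≤ t)
    (hw : w ∈ nonnegMonotoneCone ι) {i : ι} (hv : v i = 0) : 0 ≤ (t • (w - v)) i := by
  simp only [Pi.smul_apply, Pi.sub_apply, smul_eq_mul, hv, sub_zero]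
  exact mul_nonneg ht (hw.2 i)

end NonnegMonotoneCone

-- The tangent cone `T_C(v)` before taking the closure.
def radialCone {E : Type*} [AddCommGroup E] [Module ℝ E] (C : Set E) (v : E) : Set E :=
  {x | ∃ t : ℝ, 0 ≤ t ∧ ∃ w ∈ C, x = t • (w - v)}

lemma mem_radialCone_of_add_smul_mem {E : Type*} [AddCommGroup E] [Module ℝ E] {C : Set E}
    {v x : E} {ε : ℝ} (hε : 0 < ε) (h : v + ε • x ∈ C) : x ∈ radialCone C v :=
  ⟨ε⁻¹, inv_nonneg.2 hε.le, v + ε • x, h, by rw [add_sub_cancel_left, inv_smul_smul₀ hε.ne']⟩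

theorem radialCone_nonnegMonotoneCone {ι : Type*} [Preorder ι] [Finite ι] {v : ι → ℝ}
    (hv : v ∈ nonnegMonotoneCone ι) :
    radialCone (nonnegMonotoneCone ι) v =
      {x | (∀ i j, i ≤ j → v i = v j → x i ≤ x j) ∧ ∀ i, v i = 0 → 0 ≤ x i} := by
  ext x
  constructor
  · rintro ⟨t, ht, w, hw, rfl⟩
    exact ⟨fun i j hij hvij => le_of_smul_sub_mem_nonnegMonotoneCone ht hw hij hvij,
      fun i hvi => nonneg_of_smul_sub_mem_nonnegMonotoneCone ht hw hvi⟩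
  · rintro ⟨hmono, hpos⟩
    have hmono' : ∀ i j, i ≤ j → v i < v j ∨ x i ≤ x j := fun i j hij =>
      (eq_or_ne (v i) (v j)).symm.imp (hv.1 hij).lt_of_ne (hmono i j hij)
    have hpos' : ∀ i, 0 < v i ∨ 0 ≤ x i := fun i =>
      (eq_or_ne 0 (v i)).symm.imp (hv.2 i).lt_of_ne fun h => hpos i h.symm
    obtain ⟨ε, hmem, hε⟩ :=
      ((eventually_add_smul_mem_nonnegMonotoneCone hv hmono' hpos').and
        self_mem_nhdsWithin).exists
    exact mem_radialCone_of_add_smul_mem hε hmem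

theorem stmt_3_general {p l : ℕ} (hl : 0 < l)
    (b : Fin p → Fin l) (hb : Monotone b)
    (u : Fin l → ℝ) (hu : StrictMono u) (hu0 : 0 ≤ u ⟨0, hl⟩)
    (v : Fin p → ℝ) (hv : v = fun i => u (b i)) :
    (u ⟨0, hl⟩ = 0 →
      {x : Fin p → ℝ | ∃ t : ℝ, 0 ≤ t ∧ ∃ w : Fin p → ℝ,
        (Monotone w ∧ ∀ i, 0 ≤ w i) ∧ x = t • (w - v)} =
      {x : Fin p → ℝ | (∀ i j : Fin p, b i = b j → i ≤ j → x i ≤ x j) ∧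
        ∀ i, b i = ⟨0, hl⟩ → 0 ≤ x i}) ∧
    (u ⟨0, hl⟩ ≠ 0 →
      {x : Fin p → ℝ | ∃ t : ℝ, 0 ≤ t ∧ ∃ w : Fin p → ℝ,
        (Monotone w ∧ ∀ i, 0 ≤ w i) ∧ x = t • (w - v)} =
      {x : Fin p → ℝ | ∀ i j : Fin p, b i = b j → i ≤ j → x i ≤ x j}) := by
  subst hv
  have hmin (i : Fin p) : u ⟨0, hl⟩ ≤ u (b i) :=
    hu.monotone (Fin.le_iff_val_le_val.2 (Nat.zero_le _))
  have hvK : (fun i => u (b i)) ∈ nonnegMonotoneCone (Fin p) :=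
    ⟨hu.monotone.comp hb, fun i => hu0.trans (hmin i)⟩
  refine ⟨fun h0 => ?_, fun h0 => ?_⟩ <;>
    change radialCone (nonnegMonotoneCone (Fin p)) _ = _ <;>
    rw [radialCone_nonnegMonotoneCone hvK] <;> ext x
  · simp only [← h0, hu.injective.eq_iff, Set.mem_ofPred_eq]
    exact and_congr (forall₂_congr fun _ _ => forall_comm) Iff.rfl
  · have hpos (i : Fin p) : u (b i) ≠ 0 := (lt_of_lt_of_le (hu0.lt_of_ne' h0) (hmin i)).ne'
    simp only [hu.injective.eq_iff, hpos, Set.mem_ofPred_eq, IsEmpty.forall_iff, implies_true,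
      and_true]
    exact forall₂_congr fun i j => forall_comm

theorem stmt_3 {p l : ℕ} (hl : 0 < l)
    (b : Fin p → Fin l) (hb : Monotone b) (hbsurj : Function.Surjective b)
    (u : Fin l → ℝ) (hu : StrictMono u) (hu0 : 0 ≤ u ⟨0, hl⟩)
    (v : Fin p → ℝ) (hv : v = fun i => u (b i)) :
    (u ⟨0, hl⟩ = 0 →
      {x : Fin p → ℝ | ∃ t : ℝ, 0 ≤ t ∧ ∃ w : Fin p → ℝ,
        (Monotone w ∧ ∀ i, 0 ≤ w i) ∧ x = t • (w - v)} =
      {x : Fin p → ℝ | (∀ i j : Fin p, b i = b j → i ≤ j → x i ≤ x j) ∧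
        ∀ i, b i = ⟨0, hl⟩ → 0 ≤ x i}) ∧
    (u ⟨0, hl⟩ ≠ 0 →
      {x : Fin p → ℝ | ∃ t : ℝ, 0 ≤ t ∧ ∃ w : Fin p → ℝ,
        (Monotone w ∧ ∀ i, 0 ≤ w i) ∧ x = t • (w - v)} =
      {x : Fin p → ℝ | ∀ i j : Fin p, b i = b j → i ≤ j → x i ≤ x j}) :=
  stmt_3_general hl b hb u hu hu0 v hv
end

section
/- Let K = {β ∈ ℝ^p : β_i ≥ 0 for all i} be the non-negative orthant and v ∈ K. Then the Gaussian width w(T_K(v) ∩ S^{p-1}) = E sup_{u ∈ T_K(v) ∩ S^{p-1}} ⟨g, u⟩ (with g ~ N(0, I_p)) satisfies w(T_K(v) ∩ S^{p-1}) ≤ sqrt(p − |{i : v_i = 0}|/2). -/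
/-!
Write `T g` for `g` with the coordinates in `Z = {i | v i = 0}` replaced by their positive parts.
For `u` in the tangent cone, `u i ≥ 0` on `Z`, so `⟪g, u⟫ ≤ ⟪T g, u⟫ ≤ ‖T g‖ ‖u‖` by Cauchy–Schwarz.
Hence the width is at most `E ‖T g‖ ≤ √(E ‖T g‖²)` (Jensen), and `E ‖T g‖² = p - |Z| / 2`
because `E g² = 1` while `E (max g 0)² = 1 / 2` by the symmetry `g ↦ -g` of the Gaussian.
-/

open MeasureTheory ProbabilityTheory
open scoped NNReal

section SqrtJensen

variable {α : Type*} [MeasurableSpace α] {μ : Measure α} {X : α → ℝ}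

lemma MeasureTheory.Integrable.sqrt [IsFiniteMeasure μ] (hX : Integrable X μ)
    (hX0 : 0 ≤ᵐ[μ] X) : Integrable (fun a => √(X a)) μ := by
  have hmeas : AEStronglyMeasurable (fun a => √(X a)) μ :=
    Real.continuous_sqrt.comp_aestronglyMeasurable hX.aestronglyMeasurable
  refine (((memLp_two_iff_integrable_sq hmeas).mpr ?_).integrable one_le_two)
  refine hX.congr ?_
  filter_upwards [hX0] with a ha
  exact (Real.sq_sqrt ha).symm

lemma integral_sqrt_le_sqrt_integral [IsProbabilityMeasure μ] (hX : Integrable X μ)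
    (hX0 : 0 ≤ᵐ[μ] X) : ∫ a, √(X a) ∂μ ≤ √(∫ a, X a ∂μ) :=
  Real.strictConcaveOn_sqrt.concaveOn.le_map_integral Real.continuous_sqrt.continuousOn
    isClosed_Ici hX0 hX (hX.sqrt hX0)

end SqrtJensen

namespace ProbabilityTheory

variable {v : ℝ≥0}

lemma integral_sq_gaussianReal_zero : ∫ x, x ^ 2 ∂gaussianReal 0 v = v := by
  simpa [integral_id_gaussianReal] using
    (variance_eq_integral (μ := gaussianReal 0 v) measurable_id.aemeasurable).symm

lemma max_zero_sq_add_max_zero_sq_neg (x : ℝ) : max x 0 ^ 2 + max (-x) 0 ^ 2 = x ^ 2 := by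
  rcases le_total x 0 with h | h <;> simp [h]

lemma integral_max_zero_sq_gaussianReal_zero : ∫ x, max x 0 ^ 2 ∂gaussianReal 0 v = v / 2 := by
  have hpos := (memLp_id_gaussianReal (μ := 0) (v := v) 2).pos_part.integrable_sq
  have hneg := (memLp_id_gaussianReal (μ := 0) (v := v) 2).neg_part.integrable_sq
  have hmap : (gaussianReal 0 v).map (fun x => -x) = gaussianReal 0 v := by
    simpa using gaussianReal_map_neg (μ := 0) (v := v)
  have hsymm : ∫ x, max (-x) 0 ^ 2 ∂gaussianReal 0 v = ∫ x, max x 0 ^ 2 ∂gaussianReal 0 v := by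
    conv_rhs => rw [← hmap]
    rw [integral_map (by fun_prop) (by fun_prop)]
  have hsum := integral_add hpos hneg
  simp only [id, max_zero_sq_add_max_zero_sq_neg, integral_sq_gaussianReal_zero, hsymm] at hsum
  linarith

end ProbabilityTheory

section Truncation

variable {ι : Type*} [Fintype ι] [DecidableEq ι]

def posPartOn (Z : Finset ι) (g : ι → ℝ) (i : ι) : ℝ := if i ∈ Z then max (g i) 0 else g i

lemma sum_mul_le_sqrt_sum_sq_posPartOn {Z : Finset ι} (g u : ι → ℝ) (hu : ∀ i ∈ Z, 0 ≤ u i) :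
    ∑ i, g i * u i ≤ √(∑ i, posPartOn Z g i ^ 2) * √(∑ i, u i ^ 2) :=
  calc ∑ i, g i * u i ≤ ∑ i, posPartOn Z g i * u i := by
        refine Finset.sum_le_sum fun i _ => ?_
        unfold posPartOn
        split_ifs with hi
        · exact mul_le_mul_of_nonneg_right (le_max_left _ _) (hu i hi)
        · exact le_rfl
    _ ≤ _ := Real.sum_mul_le_sqrt_mul_sqrt _ _ _

variable (Z : Finset ι) (v : ℝ≥0) (i : ι)

lemma integrable_posPartOn_sq_gaussianReal :
    Integrable (fun g => posPartOn Z g i ^ 2) (Measure.pi fun _ : ι => gaussianReal 0 v) := by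
  by_cases hi : i ∈ Z <;> simp only [posPartOn, hi, if_true, if_false]
  · exact integrable_comp_eval (μ := fun _ => gaussianReal 0 v) (f := fun x => max x 0 ^ 2)
      (memLp_id_gaussianReal 2).pos_part.integrable_sq
  · exact integrable_comp_eval (μ := fun _ => gaussianReal 0 v) (f := fun x => x ^ 2)
      (memLp_id_gaussianReal 2).integrable_sq

lemma integral_posPartOn_sq_gaussianReal :
    ∫ g, posPartOn Z g i ^ 2 ∂Measure.pi (fun _ : ι => gaussianReal 0 v)
      = if i ∈ Z then (v : ℝ) / 2 else v := by
  by_cases hi : i ∈ Z <;> simp only [posPartOn, hi, if_true, if_false]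
  · rw [integral_comp_eval (f := fun x => max x 0 ^ 2) (by fun_prop),
      integral_max_zero_sq_gaussianReal_zero]
  · rw [integral_comp_eval (f := fun x => x ^ 2) (by fun_prop), integral_sq_gaussianReal_zero]

lemma integral_sum_posPartOn_sq_gaussianReal :
    ∫ g, ∑ i, posPartOn Z g i ^ 2 ∂Measure.pi (fun _ : ι => gaussianReal 0 v)
      = v * (Fintype.card ι - Z.card / 2) := by
  rw [integral_finsetSum _ fun i _ => integrable_posPartOn_sq_gaussianReal Z v i]
  simp only [integral_posPartOn_sq_gaussianReal, Finset.sum_ite, Finset.filter_not,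
    Finset.sum_const, nsmul_eq_mul, Finset.filter_mem_eq_inter, Finset.univ_inter,
    Finset.card_univ_sdiff, Nat.cast_sub (Finset.card_le_univ Z)]
  ring

end Truncation

theorem stmt_4_general {p : ℕ} (v : Fin p → ℝ) :
    (∫ g : Fin p → ℝ,
        sSup ((fun u => ∑ i, g i * u i) ''
          ({x : Fin p → ℝ | ∀ i, v i = 0 → 0 ≤ x i} ∩ {x | ∑ i, (x i) ^ 2 = 1}))
        ∂(Measure.pi fun _ : Fin p => gaussianReal 0 1))
      ≤ Real.sqrt ((p : ℝ) - ({i : Fin p | v i = 0}.ncard : ℝ) / 2) := by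
  set Z := Finset.univ.filter fun i => v i = 0
  set γ := Measure.pi fun _ : Fin p => gaussianReal 0 1
  set F := fun g : Fin p → ℝ => sSup ((fun u => ∑ i, g i * u i) ''
    ({x : Fin p → ℝ | ∀ i, v i = 0 → 0 ≤ x i} ∩ {x | ∑ i, (x i) ^ 2 = 1}))
  have hsq : Integrable (fun g => ∑ i, posPartOn Z g i ^ 2) γ :=
    integrable_finsetSum _ fun i _ => integrable_posPartOn_sq_gaussianReal Z 1 i
  have hsq_nonneg : 0 ≤ᵐ[γ] fun g => ∑ i, posPartOn Z g i ^ 2 :=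
    .of_forall fun g => Finset.sum_nonneg fun i _ => sq_nonneg _
  have hFle : ∀ g, F g ≤ √(∑ i, posPartOn Z g i ^ 2) := by
    refine fun g => Real.sSup_le ?_ (Real.sqrt_nonneg _)
    rintro _ ⟨u, ⟨hu, hu1⟩, rfl⟩
    have := sum_mul_le_sqrt_sum_sq_posPartOn (Z := Z) g u fun i hi =>
      hu i (Finset.mem_filter.mp hi).2
    rwa [show ∑ i, u i ^ 2 = 1 from hu1, Real.sqrt_one, mul_one] at this
  have hZ : ({i : Fin p | v i = 0}.ncard : ℝ) = Z.card := by
    rw [← Set.ncard_coe_finset]; simp [Z]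
  by_cases hF : Integrable F γ
  · calc ∫ g, F g ∂γ ≤ ∫ g, √(∑ i, posPartOn Z g i ^ 2) ∂γ :=
          integral_mono hF (hsq.sqrt hsq_nonneg) hFle
      _ ≤ √(∫ g, ∑ i, posPartOn Z g i ^ 2 ∂γ) := integral_sqrt_le_sqrt_integral hsq hsq_nonneg
      _ = _ := by rw [integral_sum_posPartOn_sq_gaussianReal, hZ]; simp
  · rw [integral_undef hF]
    positivity

theorem stmt_4 {p : ℕ} (v : Fin p → ℝ) (hv : ∀ i, 0 ≤ v i) :
    (∫ g : Fin p → ℝ,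
        sSup ((fun u => ∑ i, g i * u i) ''
          ({x : Fin p → ℝ | ∀ i, v i = 0 → 0 ≤ x i} ∩ {x | ∑ i, (x i) ^ 2 = 1}))
        ∂(Measure.pi fun _ : Fin p => gaussianReal 0 1))
      ≤ Real.sqrt ((p : ℝ) - ({i : Fin p | v i = 0}.ncard : ℝ) / 2) :=
  stmt_4_general v
end

section
/- Fix β̂ ∈ ℝ^p, an integer s^u ∈ [1,p], and R > 0 with R² ≥ Σ_{i > s^u} β̂_{#i}², where |β̂_{#1}| ≥ ... ≥ |β̂_{#p}| are the coordinates ordered by magnitude. Then the maximum of ‖v‖_1 over vectors v with ‖v − β̂‖ ≤ R and ‖v‖_0 ≤ s^u is achieved by the vector that keeps the s^u largest-magnitude coordinates of β̂, adds sign(β̂_{#i})·c to each of them with c = sqrt((R² − Σ_{i > s^u} β̂_{#i}²)/s^u), and sets the remaining coordinates to zero. -/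
/-!
The ℓ¹ norm of a vector `w` supported on a set `W` with `#W ≤ s` splits as
`∑_W |w i| ≤ ∑_W |b i| + ∑_W |w i - b i|`. The first sum is at most the sum of the `s` largest
`|b i|`. For the second, the residual budget of `w` on `W` is `R² - ∑_{i ∉ W} b i ²`, which is at
most `R² - ∑_{i ∉ S} b i ²` because `S` carries the largest `b i ²`; Cauchy–Schwarz then bounds
the second sum by `√(s (R² - ∑_{i ∉ S} b i ²))`. The vector pushing every top coordinate of `b`
outwards by the same amount `c` attains both bounds simultaneously.
-/

open Finset

namespace Finset

variable {ι M : Type*} [DecidableEq ι] [AddCommMonoid M] [LinearOrder M] [IsOrderedAddMonoid M]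

theorem sum_le_sum_of_card_le_of_forall_le {s t : Finset ι} {f : ι → M}
    (hf : ∀ i ∈ s, 0 ≤ f i) (hcard : #t ≤ #s) (hs : ∀ i ∈ s, ∀ j ∉ s, f j ≤ f i) :
    ∑ i ∈ t, f i ≤ ∑ i ∈ s, f i := by
  have hcard' : #(t \ s) ≤ #(s \ t) := by
    have := card_sdiff_add_card_inter t s
    have := card_sdiff_add_card_inter s t
    rw [inter_comm] at this
    omega
  have hdiff : ∑ i ∈ t \ s, f i ≤ ∑ i ∈ s \ t, f i := by
    rcases (s \ t).eq_empty_or_nonempty with hst | hst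
    · rw [hst, card_empty, Nat.le_zero, card_eq_zero] at hcard'
      rw [hst, hcard']
    · obtain ⟨i₀, hi₀, hmin⟩ := exists_mem_eq_inf' hst f
      have hi₀s : i₀ ∈ s := (mem_sdiff.mp hi₀).1
      calc ∑ i ∈ t \ s, f i ≤ #(t \ s) • (s \ t).inf' hst f :=
            sum_le_card_nsmul _ _ _ fun j hj => hmin ▸ hs i₀ hi₀s j (mem_sdiff.mp hj).2
        _ ≤ #(s \ t) • (s \ t).inf' hst f := nsmul_le_nsmul_left (hmin ▸ hf i₀ hi₀s) hcard'
        _ ≤ ∑ i ∈ s \ t, f i := card_nsmul_le_sum _ _ _ fun i hi => inf'_le f hi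
  rw [← sum_inter_add_sum_sdiff t s, ← sum_inter_add_sum_sdiff s t, inter_comm]
  exact add_le_add_right hdiff _

end Finset

theorem sum_abs_le_sqrt_card_mul_sum_sq {ι : Type*} (s : Finset ι) (x : ι → ℝ) :
    ∑ i ∈ s, |x i| ≤ √(#s * ∑ i ∈ s, x i ^ 2) := by
  refine (le_abs_self _).trans (Real.abs_le_sqrt ?_)
  simpa only [sq_abs] using sq_sum_le_card_mul_sum_sq (s := s) (f := fun i => |x i|)

theorem mul_sqrt_div_self {k : ℝ} (hk : 0 ≤ k) (x : ℝ) : k * √(x / k) = √(k * x) := by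
  rcases hk.eq_or_lt with rfl | hk
  · simp
  · rw [← Real.sqrt_sq hk.le, ← Real.sqrt_mul (sq_nonneg k), Real.sqrt_sq hk.le]
    congr 1
    field_simp

theorem mul_sq_sqrt_div_self_le {k x : ℝ} (hk : 0 ≤ k) (hx : 0 ≤ x) : k * √(x / k) ^ 2 ≤ x := by
  rw [Real.sq_sqrt (div_nonneg hx hk)]
  rcases hk.eq_or_lt with rfl | hk
  · simpa using hx
  · rw [mul_div_cancel₀ _ hk.ne']

theorem abs_add_ite_neg_mul {c : ℝ} (x : ℝ) (hc : 0 ≤ c) :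
    |x + (if x < 0 then -1 else 1) * c| = |x| + c := by
  split_ifs with hx
  · rw [abs_of_neg hx, abs_of_neg (by linarith)]
    ring
  · rw [abs_of_nonneg (not_lt.mp hx), abs_of_nonneg (by linarith [not_lt.mp hx])]
    ring

section SparseBall

variable {ι : Type*} [DecidableEq ι]

noncomputable def topBoost (b : ι → ℝ) (S : Finset ι) (c : ℝ) (i : ι) : ℝ :=
  if i ∈ S then b i + (if b i < 0 then -1 else 1) * c else 0

theorem topBoost_of_notMem (b : ι → ℝ) {S : Finset ι} (c : ℝ) {i : ι} (hi : i ∉ S) :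
    topBoost b S c i = 0 :=
  if_neg hi

theorem setOf_topBoost_ne_zero_subset (b : ι → ℝ) (S : Finset ι) (c : ℝ) :
    {i | topBoost b S c i ≠ 0} ⊆ S := by
  intro i hi
  by_contra hiS
  exact hi (topBoost_of_notMem b c hiS)

theorem sum_abs_topBoost [Fintype ι] (b : ι → ℝ) (S : Finset ι) {c : ℝ} (hc : 0 ≤ c) :
    ∑ i, |topBoost b S c i| = ∑ i ∈ S, |b i| + #S * c := by
  have hon : ∑ i ∈ S, |topBoost b S c i| = ∑ i ∈ S, (|b i| + c) :=
    sum_congr rfl fun i hi => by rw [topBoost, if_pos hi, abs_add_ite_neg_mul _ hc]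
  have hoff : ∑ i ∈ Sᶜ, |topBoost b S c i| = 0 :=
    sum_eq_zero fun i hi => by rw [topBoost_of_notMem b c (mem_compl.mp hi), abs_zero]
  rw [← sum_add_sum_compl S, hon, hoff, add_zero, sum_add_distrib, sum_const, nsmul_eq_mul]

theorem sum_sq_topBoost_sub [Fintype ι] (b : ι → ℝ) (S : Finset ι) (c : ℝ) :
    ∑ i, (topBoost b S c i - b i) ^ 2 = #S * c ^ 2 + ∑ i ∈ Sᶜ, b i ^ 2 := by
  have hon : ∑ i ∈ S, (topBoost b S c i - b i) ^ 2 = ∑ i ∈ S, c ^ 2 :=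
    sum_congr rfl fun i hi => by rw [topBoost, if_pos hi]; split_ifs <;> ring
  have hoff : ∑ i ∈ Sᶜ, (topBoost b S c i - b i) ^ 2 = ∑ i ∈ Sᶜ, b i ^ 2 :=
    sum_congr rfl fun i hi => by rw [topBoost_of_notMem b c (mem_compl.mp hi)]; ring
  rw [← sum_add_sum_compl S, hon, hoff, sum_const, nsmul_eq_mul]

theorem sum_abs_le_of_sum_sq_sub_le [Fintype ι] {b w : ι → ℝ} {S W : Finset ι} {r : ℝ}
    (hS : ∀ i ∈ S, ∀ j ∉ S, |b j| ≤ |b i|) (hW : ∀ i ∉ W, w i = 0) (hcard : #W ≤ #S)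
    (hw : ∑ i, (w i - b i) ^ 2 ≤ r) :
    ∑ i, |w i| ≤ ∑ i ∈ S, |b i| + √(#S * (r - ∑ i ∈ Sᶜ, b i ^ 2)) := by
  have hbudget : ∑ i ∈ W, (w i - b i) ^ 2 ≤ r - ∑ i ∈ Wᶜ, b i ^ 2 := by
    have hoff : ∑ i ∈ Wᶜ, (w i - b i) ^ 2 = ∑ i ∈ Wᶜ, b i ^ 2 :=
      sum_congr rfl fun i hi => by rw [hW i (mem_compl.mp hi), zero_sub, neg_sq]
    rw [← sum_add_sum_compl W, hoff] at hw
    linarith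
  have htail : ∑ i ∈ Sᶜ, b i ^ 2 ≤ ∑ i ∈ Wᶜ, b i ^ 2 := by
    have := sum_le_sum_of_card_le_of_forall_le (fun i _ => sq_nonneg (b i)) hcard
      fun i hi j hj => sq_le_sq.mpr (hS i hi j hj)
    have := sum_add_sum_compl W fun i => b i ^ 2
    have := sum_add_sum_compl S fun i => b i ^ 2
    linarith
  have hresidual : ∑ i ∈ W, |w i - b i| ≤ √(#S * (r - ∑ i ∈ Sᶜ, b i ^ 2)) := by
    refine (sum_abs_le_sqrt_card_mul_sum_sq W _).trans (Real.sqrt_le_sqrt ?_)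
    exact mul_le_mul (by exact_mod_cast hcard) (by linarith)
      (sum_nonneg fun i _ => sq_nonneg _) (Nat.cast_nonneg _)
  calc ∑ i, |w i| = ∑ i ∈ W, |w i| :=
        (sum_subset (subset_univ W) fun i _ hi => by rw [hW i hi, abs_zero]).symm
    _ ≤ ∑ i ∈ W, (|b i| + |w i - b i|) :=
        sum_le_sum fun i _ => (abs_add_le (b i) (w i - b i)).trans_eq' (by ring_nf)
    _ = ∑ i ∈ W, |b i| + ∑ i ∈ W, |w i - b i| := sum_add_distrib
    _ ≤ ∑ i ∈ S, |b i| + √(#S * (r - ∑ i ∈ Sᶜ, b i ^ 2)) :=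
        add_le_add (sum_le_sum_of_card_le_of_forall_le (fun i _ => abs_nonneg _) hcard hS)
          hresidual

end SparseBall

theorem stmt_8_general {p : ℕ} (b : Fin p → ℝ) (su : ℕ)
    (R : ℝ) (hR : 0 < R)
    (S : Finset (Fin p)) (hScard : S.card = su)
    (hStop : ∀ i ∈ S, ∀ j ∉ S, |b j| ≤ |b i|)
    (hR2 : ∑ i ∈ Sᶜ, (b i) ^ 2 ≤ R ^ 2)
    (c : ℝ) (hc : c = Real.sqrt ((R ^ 2 - ∑ i ∈ Sᶜ, (b i) ^ 2) / su))
    (v : Fin p → ℝ)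
    (hv : ∀ i, v i = if i ∈ S then b i + (if b i < 0 then -1 else 1) * c else 0) :
    (Real.sqrt (∑ i, (v i - b i) ^ 2) ≤ R ∧ {i | v i ≠ 0}.ncard ≤ su) ∧
    ∀ w : Fin p → ℝ, Real.sqrt (∑ i, (w i - b i) ^ 2) ≤ R →
      {i | w i ≠ 0}.ncard ≤ su → ∑ i, |w i| ≤ ∑ i, |v i| := by
  obtain rfl : v = topBoost b S c := funext hv
  subst hScard hc
  have hbudget : 0 ≤ R ^ 2 - ∑ i ∈ Sᶜ, b i ^ 2 := sub_nonneg.mpr hR2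
  refine ⟨⟨?_, ?_⟩, fun w hw hwcard => ?_⟩
  · rw [Real.sqrt_le_left hR.le, sum_sq_topBoost_sub]
    linarith [mul_sq_sqrt_div_self_le (Nat.cast_nonneg #S) hbudget]
  · calc {i | topBoost b S _ i ≠ 0}.ncard ≤ (S : Set (Fin p)).ncard :=
          Set.ncard_le_ncard (setOf_topBoost_ne_zero_subset b S _) S.finite_toSet
      _ = #S := Set.ncard_coe_finset S
  · rw [sum_abs_topBoost b S (Real.sqrt_nonneg _), mul_sqrt_div_self (Nat.cast_nonneg _)]
    rw [Set.ncard_eq_toFinset_card'] at hwcard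
    exact sum_abs_le_of_sum_sq_sub_le hStop (fun i hi => by simpa using hi) hwcard
      ((Real.sqrt_le_left hR.le).mp hw)

theorem stmt_8 {p : ℕ} (b : Fin p → ℝ) (su : ℕ) (hsu1 : 1 ≤ su) (hsup : su ≤ p)
    (R : ℝ) (hR : 0 < R)
    (S : Finset (Fin p)) (hScard : S.card = su)
    (hStop : ∀ i ∈ S, ∀ j ∉ S, |b j| ≤ |b i|)
    (hR2 : ∑ i ∈ Sᶜ, (b i) ^ 2 ≤ R ^ 2)
    (c : ℝ) (hc : c = Real.sqrt ((R ^ 2 - ∑ i ∈ Sᶜ, (b i) ^ 2) / su))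
    (v : Fin p → ℝ)
    (hv : ∀ i, v i = if i ∈ S then b i + (if b i < 0 then -1 else 1) * c else 0) :
    (Real.sqrt (∑ i, (v i - b i) ^ 2) ≤ R ∧ {i | v i ≠ 0}.ncard ≤ su) ∧
    ∀ w : Fin p → ℝ, Real.sqrt (∑ i, (w i - b i) ^ 2) ≤ R →
      {i | w i ≠ 0}.ncard ≤ su → ∑ i, |w i| ≤ ∑ i, |v i| :=
  stmt_8_general b su R hR S hScard hStop hR2 c hc v hv
end

section
/- Let f, ψ : ℝ^p → ℝ be convex with bounded subgradients ‖g‖ ≤ C₂ on the relevant region, suppose the feasible set Q = {η : ψ(η) ≤ 0} admits a strictly feasible point η^{sf} with ψ(η^{sf}) < 0, and let η* minimize f over Q. Run constrained subgradient descent η_{n+1} = η_n − h_n g_n, where g_n is a subgradient of f at η_n if η_n ∈ Q and a subgradient of ψ at η_n otherwise, starting from η₁ with ‖η₁ − η*‖ ≤ C₁ and ‖η₁ − η^{sf}‖ ≤ C₁. Then after k iterations, the best feasible value found satisfies f(η_k^{best}) − f(η*) ≲ (C₁² + C₂² Σ_{n=1}^k h_n²) / (Σ_{n=1}^k h_n).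 -/
open RealInnerProductSpace

/-!
Test every iterate against the point `z = (1 - l) • η* + l • ηsf`, which lies within `C₁` of
`η 1` and satisfies `f z ≤ f η* + l (f ηsf - f η*)` and `ψ z ≤ l ψ ηsf`. If every feasible iterate
has gap at least `B ≥ l (f ηsf - f η* - ψ ηsf)`, then `⟪g n, η n - z⟫ ≥ -l ψ ηsf` for all iterates,
feasible or not, and the usual expansion of `‖η (n + 1) - z‖²` bounds `-2 l ψ ηsf ∑ h n` by
`C₁² + C₂² ∑ h n ²`. Taking `l` as large as allowed bounds the best gap, up to the case `l = 1`
where the gap is only bounded by that of the first feasible iterate.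
-/

open Finset

section SubgradientStep

variable {E : Type*} [NormedAddCommGroup E] [InnerProductSpace ℝ E]

theorem norm_sub_smul_sub_sq (x v z : E) (t : ℝ) :
    ‖x - t • v - z‖ ^ 2 = ‖x - z‖ ^ 2 - 2 * t * ⟪v, x - z⟫ + t ^ 2 * ‖v‖ ^ 2 := by
  rw [sub_right_comm, norm_sub_sq_real, real_inner_smul_right, norm_smul, mul_pow,
    Real.norm_eq_abs, sq_abs, real_inner_comm]
  ring

variable {η g : ℕ → E} {h : ℕ → ℝ} {C₂ m : ℝ} {z : E}

theorem norm_sub_sq_le_of_forall_le_inner (hh : ∀ n, 0 ≤ h n)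
    (hupdate : ∀ n, η (n + 1) = η n - h n • g n) (hg : ∀ n, ‖g n‖ ≤ C₂) :
    ∀ k, (∀ n ∈ Icc 1 k, m ≤ ⟪g n, η n - z⟫) →
      ‖η (k + 1) - z‖ ^ 2
        ≤ ‖η 1 - z‖ ^ 2 - 2 * m * ∑ n ∈ Icc 1 k, h n + C₂ ^ 2 * ∑ n ∈ Icc 1 k, h n ^ 2
  | 0, _ => by simp
  | k + 1, hm => by
    have ih := norm_sub_sq_le_of_forall_le_inner hh hupdate hg k fun n hn =>
      hm n (Icc_subset_Icc_right k.le_succ hn)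
    have hmk := hm (k + 1) (by simp)
    have hgk : ‖g (k + 1)‖ ^ 2 ≤ C₂ ^ 2 := pow_le_pow_left₀ (norm_nonneg _) (hg _) 2
    have hhk := hh (k + 1)
    rw [hupdate, norm_sub_smul_sub_sq, sum_Icc_succ_top (by omega),
      sum_Icc_succ_top (by omega)]
    nlinarith [mul_le_mul_of_nonneg_left hgk (sq_nonneg (h (k + 1)))]

theorem two_mul_mul_sum_le_of_forall_le_inner (hh : ∀ n, 0 ≤ h n)
    (hupdate : ∀ n, η (n + 1) = η n - h n • g n) (hg : ∀ n, ‖g n‖ ≤ C₂) {k : ℕ}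
    (hm : ∀ n ∈ Icc 1 k, m ≤ ⟪g n, η n - z⟫) :
    2 * m * ∑ n ∈ Icc 1 k, h n ≤ ‖η 1 - z‖ ^ 2 + C₂ ^ 2 * ∑ n ∈ Icc 1 k, h n ^ 2 := by
  nlinarith [norm_sub_sq_le_of_forall_le_inner hh hupdate hg k hm, sq_nonneg ‖η (k + 1) - z‖]

theorem mul_sum_le_of_gap_ge {f ψ : E → ℝ} (hf : ConvexOn ℝ Set.univ f)
    (hψ : ConvexOn ℝ Set.univ ψ) (hh : ∀ n, 0 ≤ h n)
    (hupdate : ∀ n, η (n + 1) = η n - h n • g n) (hg : ∀ n, ‖g n‖ ≤ C₂)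
    (hsub_f : ∀ n, ψ (η n) ≤ 0 → ∀ z, ⟪g n, z - η n⟫ ≤ f z - f (η n))
    (hsub_ψ : ∀ n, ¬ψ (η n) ≤ 0 → ∀ z, ⟪g n, z - η n⟫ ≤ ψ z - ψ (η n))
    {ηstar ηsf : E} (hstar : ψ ηstar ≤ 0) {C₁ : ℝ} (hinit1 : ‖η 1 - ηstar‖ ≤ C₁)
    (hinit2 : ‖η 1 - ηsf‖ ≤ C₁) {k : ℕ} {l B : ℝ} (hl0 : 0 ≤ l) (hl1 : l ≤ 1)
    (hlB : l * (f ηsf - f ηstar - ψ ηsf) ≤ B)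
    (hB : ∀ n ∈ Icc 1 k, ψ (η n) ≤ 0 → f ηstar + B ≤ f (η n)) :
    l * (2 * -ψ ηsf * ∑ n ∈ Icc 1 k, h n) ≤ C₁ ^ 2 + C₂ ^ 2 * ∑ n ∈ Icc 1 k, h n ^ 2 := by
  set z := (1 - l) • ηstar + l • ηsf
  have hl : 0 ≤ 1 - l := by linarith
  have hfz : f z ≤ (1 - l) * f ηstar + l * f ηsf :=
    hf.2 (Set.mem_univ _) (Set.mem_univ _) hl hl0 (by ring)
  have hψz : ψ z ≤ (1 - l) * ψ ηstar + l * ψ ηsf :=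
    hψ.2 (Set.mem_univ _) (Set.mem_univ _) hl hl0 (by ring)
  have hz : ‖η 1 - z‖ ≤ C₁ := by
    simp only [← dist_eq_norm, ← Metric.mem_closedBall'] at hinit1 hinit2 ⊢
    exact convex_closedBall (η 1) C₁ hinit1 hinit2 hl hl0 (by ring)
  have hinner : ∀ n ∈ Icc 1 k, l * -ψ ηsf ≤ ⟪g n, η n - z⟫ := by
    intro n hn
    rw [← neg_sub, inner_neg_right]
    by_cases hfeas : ψ (η n) ≤ 0
    · nlinarith [hsub_f n hfeas z, hB n hn hfeas]
    · nlinarith [hsub_ψ n hfeas z]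
  have hz2 : ‖η 1 - z‖ ^ 2 ≤ C₁ ^ 2 := pow_le_pow_left₀ (norm_nonneg _) hz 2
  linarith [two_mul_mul_sum_le_of_forall_le_inner hh hupdate hg hinner]

end SubgradientStep

theorem csInf_image_le_of_mem_Icc (u : ℕ → ℝ) (P : ℕ → Prop) {k n : ℕ} (hn : n ∈ Icc 1 k)
    (hP : P n) : sInf (u '' {i | 1 ≤ i ∧ i ≤ k ∧ P i}) ≤ u n := by
  have hfin : {i | 1 ≤ i ∧ i ≤ k ∧ P i}.Finite :=
    (Set.finite_Icc 1 k).subset fun i hi => ⟨hi.1, hi.2.1⟩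
  rw [mem_Icc] at hn
  exact csInf_le (hfin.image u).bddBelow ⟨n, ⟨hn.1, hn.2, hP⟩, rfl⟩

open Classical in
theorem exists_forall_csInf_image_le (u : ℕ → ℝ) (P : ℕ → Prop) :
    ∃ W, ∀ k, sInf (u '' {i | 1 ≤ i ∧ i ≤ k ∧ P i}) ≤ W := by
  by_cases hex : ∃ n, 1 ≤ n ∧ P n
  · refine ⟨max (u (Nat.find hex)) 0, fun k => ?_⟩
    obtain ⟨hfirst1, hfirstP⟩ := Nat.find_spec hex
    by_cases hk : Nat.find hex ≤ k
    · exact (csInf_image_le_of_mem_Icc u P (mem_Icc.2 ⟨hfirst1, hk⟩) hfirstP).trans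
        (le_max_left _ _)
    · have hempty : {i | 1 ≤ i ∧ i ≤ k ∧ P i} = ∅ :=
        Set.eq_empty_of_forall_notMem fun i hi =>
          hk ((Nat.find_min' hex ⟨hi.1, hi.2.2⟩).trans hi.2.1)
      simp [hempty]
  · refine ⟨0, fun k => ?_⟩
    have hempty : {i | 1 ≤ i ∧ i ≤ k ∧ P i} = ∅ :=
      Set.eq_empty_of_forall_notMem fun i hi => hex ⟨i, hi.1, hi.2.2⟩
    simp [hempty]

/-- The dichotomy of the gap argument: either some `l = V / a ≤ 1` is admissible, or `l = 1` is. -/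
theorem le_mul_div_of_forall_mul_le {a S D V W : ℝ} (ha : 0 < a) (hS : 0 < S) (hD : 0 ≤ D)
    (hW : 0 ≤ W) (hVW : V ≤ W) (h : ∀ l, 0 ≤ l → l ≤ 1 → l * a ≤ V → l * S ≤ D) :
    V ≤ (a + W) * D / S := by
  rw [le_div_iff₀ hS]
  rcases lt_or_ge V 0 with hV | hV
  · nlinarith [mul_nonneg (add_nonneg ha.le hW) hD]
  rcases le_or_gt V a with hVa | hVa
  · have := h (V / a) (div_nonneg hV ha.le) ((div_le_one ha).2 hVa) (div_mul_cancel₀ V ha.ne').le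
    rw [div_mul_eq_mul_div, div_le_iff₀ ha] at this
    nlinarith [mul_nonneg hW hD]
  · have := h 1 zero_le_one le_rfl (by linarith)
    nlinarith [mul_le_mul hVW (one_mul S ▸ this) hS.le hW]

theorem stmt_11 {p : ℕ} (f ψ : EuclideanSpace ℝ (Fin p) → ℝ)
    (hf : ConvexOn ℝ Set.univ f) (hψ : ConvexOn ℝ Set.univ ψ)
    (Q : Set (EuclideanSpace ℝ (Fin p))) (hQ : Q = {η | ψ η ≤ 0})
    (ηsf : EuclideanSpace ℝ (Fin p)) (hsf : ψ ηsf < 0)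
    (ηstar : EuclideanSpace ℝ (Fin p)) (hstar_mem : ηstar ∈ Q)
    (hstar_min : ∀ η ∈ Q, f ηstar ≤ f η)
    (C₁ C₂ : ℝ) (h : ℕ → ℝ) (hh : ∀ n, 0 < h n)
    (η g : ℕ → EuclideanSpace ℝ (Fin p))
    (hupdate : ∀ n, η (n + 1) = η n - h n • g n)
    (hgbound : ∀ n, ‖g n‖ ≤ C₂)
    (hgsub : ∀ n, (η n ∈ Q → ∀ z, ⟪g n, z - η n⟫ ≤ f z - f (η n)) ∧
      (η n ∉ Q → ∀ z, ⟪g n, z - η n⟫ ≤ ψ z - ψ (η n)))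
    (hinit1 : ‖η 1 - ηstar‖ ≤ C₁) (hinit2 : ‖η 1 - ηsf‖ ≤ C₁) :
    ∃ C : ℝ, ∀ k : ℕ, 0 < k →
      sInf ((fun i => f (η i)) '' {i | 1 ≤ i ∧ i ≤ k ∧ η i ∈ Q}) - f ηstar
        ≤ C * ((C₁ ^ 2 + C₂ ^ 2 * ∑ n ∈ Finset.Icc 1 k, (h n) ^ 2) /
            (∑ n ∈ Finset.Icc 1 k, h n)) := by
  subst hQ
  simp only [Set.mem_ofPred_eq] at *
  have hsf_gap : 0 < f ηsf - f ηstar - ψ ηsf := by linarith [hstar_min ηsf hsf.le]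
  obtain ⟨W, hW⟩ := exists_forall_csInf_image_le (fun i => f (η i)) (fun i => ψ (η i) ≤ 0)
  refine ⟨(f ηsf - f ηstar - ψ ηsf + max (W - f ηstar) 0) / (2 * -ψ ηsf), fun k hk => ?_⟩
  have hsum : 0 < ∑ n ∈ Icc 1 k, h n := sum_pos (fun n _ => hh n) ⟨1, by simp; omega⟩
  rw [div_mul_div_comm]
  refine le_mul_div_of_forall_mul_le hsf_gap (by nlinarith) (by positivity) (le_max_right _ _)
    (le_max_of_le_left (by linarith [hW k])) fun l hl0 hl1 hlB => ?_
  refine mul_sum_le_of_gap_ge hf hψ (fun n => (hh n).le) hupdate hgbound (fun n => (hgsub n).1)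
    (fun n => (hgsub n).2) hstar_mem hinit1 hinit2 hl0 hl1 hlB fun n hn hfeas => ?_
  linarith [csInf_image_le_of_mem_Icc (fun i => f (η i)) (fun i => ψ (η i) ≤ 0) hn hfeas]
end

section
/- Let f₀ and f₁ be the joint densities of (X, Y) under the Gaussian linear model Y = Xβ + ε, with X having i.i.d. rows X_i ~ N(0, Σ) and ε ~ N(0, σ² I_n), for parameters β = β* and β = β' respectively. If 2‖Σ^{1/2}(β' − β*)‖²/σ² < 1, then the chi-squared divergence satisfies χ²(f₁, f₀) = (1 − 2‖Σ^{1/2}(β' − β*)‖²/σ²)^{−n/2} − 1. -/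
/-!
Given `X`, the two laws of `Y` are products of Gaussians with common variance `σ²` and means
`Xβ'`, `Xβ*`, and `χ²(N(a, σ²), N(b, σ²)) = exp((a - b)² / σ²)`, because `φ_a² / φ_b` is
`exp((a - b)² / σ²)` times the density of `N(2a - b, σ²)`. So the inner integral is
`exp(∑ᵢ ⟪Xᵢ, β' - β*⟫² / σ²)`. Writing `Xᵢ = A gᵢ` with `gᵢ` standard Gaussian and `A` symmetric,
`⟪Xᵢ, β' - β*⟫ = ⟪gᵢ, w⟫` with `w = A (β' - β*)`, which is `N(0, ‖w‖²)`. The rows are independent,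
so the outer integral is the `n`-th power of `E exp(t Z²) = (1 - 2 t ‖w‖²)^(-1/2)`, `t = 1/σ²`.
-/

open MeasureTheory ProbabilityTheory Matrix Real
open scoped NNReal

lemma gaussianPDFReal_sq_div (a b : ℝ) {v : ℝ≥0} (hv : v ≠ 0) (y : ℝ) :
    gaussianPDFReal a v y ^ 2 / gaussianPDFReal b v y
      = rexp ((a - b) ^ 2 / v) * gaussianPDFReal (2 * a - b) v y := by
  have hv' : (0 : ℝ) < v := NNReal.coe_pos.mpr (pos_iff_ne_zero.mpr hv)
  simp only [gaussianPDFReal]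
  rw [div_eq_iff (by positivity)]
  simp only [mul_pow, ← Real.exp_nat_mul]
  field_simp
  rw [← Real.exp_add, ← Real.exp_add]
  congr 1
  push_cast
  field_simp
  ring

lemma integral_gaussianPDFReal_sq_div (a b : ℝ) {v : ℝ≥0} (hv : v ≠ 0) :
    ∫ y, gaussianPDFReal a v y ^ 2 / gaussianPDFReal b v y = rexp ((a - b) ^ 2 / v) := by
  simp_rw [gaussianPDFReal_sq_div a b hv]
  rw [integral_const_mul, integral_gaussianPDFReal_eq_one _ hv, mul_one]

lemma integral_prod_gaussianPDFReal_sq_div {ι : Type*} [Fintype ι] (a b : ι → ℝ) {v : ℝ≥0}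
    (hv : v ≠ 0) :
    ∫ y : ι → ℝ, (∏ i, gaussianPDFReal (a i) v (y i)) ^ 2 / ∏ i, gaussianPDFReal (b i) v (y i)
      = rexp (∑ i, (a i - b i) ^ 2 / v) := by
  simp_rw [← Finset.prod_pow, ← Finset.prod_div_distrib]
  rw [integral_fintype_prod_volume_eq_prod
    (fun i y => gaussianPDFReal (a i) v y ^ 2 / gaussianPDFReal (b i) v y), Real.exp_sum]
  exact Finset.prod_congr rfl fun i _ => integral_gaussianPDFReal_sq_div _ _ hv

lemma integral_exp_mul_sq_gaussianReal {v : ℝ≥0} {t : ℝ} (ht : 2 * t * v < 1) :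
    ∫ x, rexp (t * x ^ 2) ∂gaussianReal 0 v = (1 - 2 * t * v) ^ (-(1 / 2) : ℝ) := by
  rcases eq_or_ne v 0 with rfl | hv
  · simp [gaussianReal_zero_var]
  have hv' : (0 : ℝ) < v := NNReal.coe_pos.mpr (pos_iff_ne_zero.mpr hv)
  have hc : 0 < 1 - 2 * t * v := by linarith
  have hpdf : ∀ x, gaussianPDFReal 0 v x • rexp (t * x ^ 2)
      = (√(2 * π * v))⁻¹ * rexp (-((1 - 2 * t * v) / (2 * v)) * x ^ 2) := by
    intro x
    rw [gaussianPDFReal, smul_eq_mul, mul_assoc, ← Real.exp_add]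
    congr 2
    field_simp
    ring
  rw [integral_gaussianReal_eq_integral_smul hv]
  simp_rw [hpdf]
  rw [integral_const_mul, integral_gaussian, rpow_neg hc.le, ← sqrt_eq_rpow,
    show π / ((1 - 2 * t * v) / (2 * v)) = 2 * π * v / (1 - 2 * t * v) by field_simp,
    sqrt_div (by positivity), inv_mul_eq_div, div_div_cancel_left' (by positivity)]

lemma map_dotProduct_pi_gaussianReal {ι : Type*} [Fintype ι] (w : ι → ℝ) :
    (Measure.pi fun _ : ι => gaussianReal 0 1).map (· ⬝ᵥ w)
      = gaussianReal 0 ⟨∑ i, w i ^ 2, by positivity⟩ := by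
  have hL : (· ⬝ᵥ w) = innerSL ℝ (WithLp.toLp 2 w) ∘ WithLp.toLp 2 := by
    ext g; simp [dotProduct, EuclideanSpace.inner_eq_star_dotProduct, mul_comm]
  rw [hL, ← Measure.map_map (by fun_prop) (by fun_prop), map_pi_eq_stdGaussian,
    IsGaussian.map_eq_gaussianReal, integral_strongDual_stdGaussian, variance_dual_stdGaussian]
  congr
  ext
  rw [Real.coe_toNNReal _ (sq_nonneg _), innerSL_apply_norm, EuclideanSpace.norm_sq_eq]
  simp only [Real.norm_eq_abs, sq_abs]
  rfl

lemma integral_exp_mul_sq_dotProduct_pi_gaussianReal {ι : Type*} [Fintype ι] (w : ι → ℝ)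
    {t : ℝ} (ht : 2 * t * ∑ i, w i ^ 2 < 1) :
    ∫ g, rexp (t * (g ⬝ᵥ w) ^ 2) ∂Measure.pi (fun _ : ι => gaussianReal 0 1)
      = (1 - 2 * t * ∑ i, w i ^ 2) ^ (-(1 / 2) : ℝ) := by
  rw [← integral_map (φ := (· ⬝ᵥ w)) (f := fun z => rexp (t * z ^ 2))
    (by fun_prop : Continuous _).aemeasurable (by fun_prop),
    map_dotProduct_pi_gaussianReal]
  exact integral_exp_mul_sq_gaussianReal ht

theorem stmt_17_general {n p : ℕ} (σ : ℝ) (hσ : 0 < σ)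
    (A : Matrix (Fin p) (Fin p) ℝ)
    (hA : A.PosSemidef)
    (βstar β' : Fin p → ℝ)
    (hsmall : 2 * (∑ i, (A.mulVec (β' - βstar)) i ^ 2) / σ ^ 2 < 1)
    (μX : Measure (Fin n → Fin p → ℝ))
    (hμX : μX = (Measure.pi fun _ : Fin n => Measure.pi fun _ : Fin p =>
        gaussianReal 0 1).map (fun g i => A.mulVec (g i)))
    (d : (Fin p → ℝ) → (Fin n → Fin p → ℝ) → (Fin n → ℝ) → ℝ)
    (hd : ∀ β x y, d β x y = ∏ i, (Real.sqrt (2 * Real.pi * σ ^ 2))⁻¹ *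
        Real.exp (-(y i - x i ⬝ᵥ β) ^ 2 / (2 * σ ^ 2))) :
    (∫ x, (∫ y : Fin n → ℝ, (d β' x y) ^ 2 / d βstar x y) ∂μX) - 1
      = (1 - 2 * (∑ i, (A.mulVec (β' - βstar)) i ^ 2) / σ ^ 2) ^ (-(n : ℝ) / 2) - 1 := by
  set δ := β' - βstar
  set w := A *ᵥ δ
  set v : ℝ≥0 := ⟨σ ^ 2, sq_nonneg σ⟩
  have hv : v ≠ 0 := NNReal.coe_ne_zero.mp (pow_pos hσ 2).ne'
  have hd' : ∀ β x y, d β x y = ∏ i, gaussianPDFReal (x i ⬝ᵥ β) v (y i) := hd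
  have hconditional : ∀ x : Fin n → Fin p → ℝ,
      ∫ y, d β' x y ^ 2 / d βstar x y = rexp (∑ i, (x i ⬝ᵥ δ) ^ 2 / σ ^ 2) := by
    intro x
    simp_rw [hd', integral_prod_gaussianPDFReal_sq_div _ _ hv, δ, dotProduct_sub]
    rfl
  have hsymm : ∀ u, A *ᵥ u ⬝ᵥ δ = u ⬝ᵥ w := fun u => by
    rw [dotProduct_comm, dotProduct_mulVec, ← mulVec_transpose, (isHermitian_iff_isSymm.mp hA.1).eq,
      dotProduct_comm]
  have hrow : ∫ g, rexp ((g ⬝ᵥ w) ^ 2 / σ ^ 2) ∂Measure.pi (fun _ : Fin p => gaussianReal 0 1)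
      = (1 - 2 * (∑ i, w i ^ 2) / σ ^ 2) ^ (-(1 / 2) : ℝ) := by
    convert integral_exp_mul_sq_dotProduct_pi_gaussianReal w (t := (σ ^ 2)⁻¹)
      (by convert hsmall using 1; ring) using 3 <;> ring_nf
  have hc : 0 < 1 - 2 * (∑ i, w i ^ 2) / σ ^ 2 := sub_pos.mpr hsmall
  simp_rw [hconditional, hμX]
  rw [integral_map (by fun_prop : Continuous _).aemeasurable
    (by fun_prop : Continuous _).aestronglyMeasurable]
  simp_rw [hsymm, Real.exp_sum]
  rw [integral_fintype_prod_eq_pow (fun g => rexp ((g ⬝ᵥ w) ^ 2 / σ ^ 2)), hrow, Fintype.card_fin,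
    ← rpow_natCast, ← rpow_mul hc.le]
  ring_nf

theorem stmt_17 {n p : ℕ} (σ : ℝ) (hσ : 0 < σ)
    (A Sig : Matrix (Fin p) (Fin p) ℝ)
    (hA : A.PosSemidef) (hSig : Sig.PosSemidef) (hA2 : A * A = Sig)
    (βstar β' : Fin p → ℝ)
    (hsmall : 2 * (∑ i, (A.mulVec (β' - βstar)) i ^ 2) / σ ^ 2 < 1)
    (μX : Measure (Fin n → Fin p → ℝ))
    (hμX : μX = (Measure.pi fun _ : Fin n => Measure.pi fun _ : Fin p =>
        gaussianReal 0 1).map (fun g i => A.mulVec (g i)))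
    (d : (Fin p → ℝ) → (Fin n → Fin p → ℝ) → (Fin n → ℝ) → ℝ)
    (hd : ∀ β x y, d β x y = ∏ i, (Real.sqrt (2 * Real.pi * σ ^ 2))⁻¹ *
        Real.exp (-(y i - x i ⬝ᵥ β) ^ 2 / (2 * σ ^ 2))) :
    (∫ x, (∫ y : Fin n → ℝ, (d β' x y) ^ 2 / d βstar x y) ∂μX) - 1
      = (1 - 2 * (∑ i, (A.mulVec (β' - βstar)) i ^ 2) / σ ^ 2) ^ (-(n : ℝ) / 2) - 1 :=
  stmt_17_general σ hσ A hA βstar β' hsmall μX hμX d hd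
end

section
/- Let Σ̂ be a p×p positive semidefinite matrix, e_j a standard basis vector, T a closed convex cone in ℝ^p, λ > 0, and ρ > 0. Suppose η̂ minimizes ‖Σ̂^{1/2} η‖ subject to sup_{u ∈ (T ∪ −T) ∩ S^{p-1}} |(η^T Σ̂ − e_j^T) u| ≤ ρλ. Then for any u ∈ T ∩ S^{p-1} with u_j ≥ ρλ, we have ‖Σ̂^{1/2} η̂‖² ≥ (u_j − ρλ)² / (u^T Σ̂ u). -/
open Matrix

/-! Feasibility of `η` tested at `u` itself gives `u j - ρλ ≤ ⟨Σ̂ η, u⟩ = ⟨Σ̂^{1/2} η, Σ̂^{1/2} u⟩`,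
and Cauchy–Schwarz turns this lower bound on an inner product into the lower bound on
`‖Σ̂^{1/2} η‖²`. -/

theorem Matrix.transpose_mul_self_mulVec_dotProduct {m n R : Type*} [Fintype m] [Fintype n]
    [CommSemiring R] (A : Matrix m n R) (x y : n → R) :
    (Aᵀ * A) *ᵥ x ⬝ᵥ y = A *ᵥ x ⬝ᵥ A *ᵥ y := by
  rw [← mulVec_mulVec, dotProduct_comm, dotProduct_mulVec, vecMul_transpose, dotProduct_comm]

theorem Matrix.sq_div_dotProduct_self_le {ι R : Type*} [Fintype ι] [Field R] [LinearOrder R]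
    [IsStrictOrderedRing R] {a : R} {v w : ι → R} (ha : 0 ≤ a) (h : a ≤ v ⬝ᵥ w) :
    a ^ 2 / (w ⬝ᵥ w) ≤ v ⬝ᵥ v := by
  have hself_nonneg (x : ι → R) : 0 ≤ x ⬝ᵥ x := Finset.sum_nonneg fun i _ => mul_self_nonneg (x i)
  have cauchy_schwarz : (v ⬝ᵥ w) ^ 2 ≤ (v ⬝ᵥ v) * (w ⬝ᵥ w) := by
    simpa only [dotProduct, sq] using Finset.sum_mul_sq_le_sq_mul_sq Finset.univ v w
  rcases (hself_nonneg w).eq_or_lt with hw | hw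
  · rw [← hw, div_zero]
    exact hself_nonneg v
  · rw [div_le_iff₀ hw]
    exact (pow_le_pow_left₀ ha h 2).trans cauchy_schwarz

theorem stmt_18_general {p : ℕ} (Sig A : Matrix (Fin p) (Fin p) ℝ)
    (hA : A.PosSemidef) (hA2 : A * A = Sig)
    (j : Fin p) (T : Set (Fin p → ℝ))
    (lam ρ : ℝ)
    (feasible : (Fin p → ℝ) → Prop)
    (hfeasible : ∀ η, feasible η ↔ ∀ u ∈ (T ∪ -T) ∩ {x | ∑ i, (x i) ^ 2 = 1},
        |Sig.mulVec η ⬝ᵥ u - u j| ≤ ρ * lam)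
    (ηhat : Fin p → ℝ) (hηfeas : feasible ηhat) :
    ∀ u ∈ T ∩ {x | ∑ i, (x i) ^ 2 = 1}, ρ * lam ≤ u j →
      (u j - ρ * lam) ^ 2 / (u ⬝ᵥ Sig.mulVec u) ≤ ∑ i, (A.mulVec ηhat i) ^ 2 := by
  rintro u ⟨huT, hu_unit⟩ hju
  have hA_symm : A.IsSymm := by simpa using hA.1
  have hSig : Sig = Aᵀ * A := by rw [← hA2, hA_symm.eq]
  have hgap : u j - ρ * lam ≤ A *ᵥ ηhat ⬝ᵥ A *ᵥ u := by
    have hfeas_u := (hfeasible ηhat).mp hηfeas u ⟨Or.inl huT, hu_unit⟩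
    rw [hSig, transpose_mul_self_mulVec_dotProduct] at hfeas_u
    linarith [(abs_le.mp hfeas_u).1]
  rw [dotProduct_comm, hSig, transpose_mul_self_mulVec_dotProduct]
  simpa only [dotProduct, sq] using sq_div_dotProduct_self_le (sub_nonneg.mpr hju) hgap

theorem stmt_18 {p : ℕ} (Sig A : Matrix (Fin p) (Fin p) ℝ)
    (hSig : Sig.PosSemidef) (hA : A.PosSemidef) (hA2 : A * A = Sig)
    (j : Fin p) (T : Set (Fin p → ℝ)) (hTconv : Convex ℝ T) (hTclosed : IsClosed T)
    (hTcone : ∀ (c : ℝ), 0 ≤ c → ∀ x ∈ T, c • x ∈ T)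
    (lam ρ : ℝ) (hlam : 0 < lam) (hρ : 0 < ρ)
    (feasible : (Fin p → ℝ) → Prop)
    (hfeasible : ∀ η, feasible η ↔ ∀ u ∈ (T ∪ -T) ∩ {x | ∑ i, (x i) ^ 2 = 1},
        |Sig.mulVec η ⬝ᵥ u - u j| ≤ ρ * lam)
    (ηhat : Fin p → ℝ) (hηfeas : feasible ηhat)
    (hηmin : ∀ η, feasible η →
      Real.sqrt (∑ i, (A.mulVec ηhat i) ^ 2) ≤ Real.sqrt (∑ i, (A.mulVec η i) ^ 2)) :
    ∀ u ∈ T ∩ {x | ∑ i, (x i) ^ 2 = 1}, ρ * lam ≤ u j →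
      (u j - ρ * lam) ^ 2 / (u ⬝ᵥ Sig.mulVec u) ≤ ∑ i, (A.mulVec ηhat i) ^ 2 :=
  stmt_18_general Sig A hA hA2 j T lam ρ feasible hfeasible ηhat hηfeas
end

section
/- Let M^p = {β ∈ ℝ^p : β_1 ≤ ... ≤ β_p} be the monotone cone. Any β ∈ M^p can be approximated by a vector v with at most k constant pieces (v ∈ M_k^p) such that ‖β − v‖ ≤ √p · (β_p − β_1)/(2k). -/
/-!
Round every coordinate of `β` to the midpoint of its cell in the partition of `[β₀, β_{p-1}]`
into `k` cells of width `h = (β_{p-1} - β₀) / k`. Rounding is monotone and takes at most `k`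
values, and each coordinate moves by at most `h / 2`, so the Euclidean error is at most
`√p · h / 2`.
-/

open Set

/-- `⌊t⌋` clamped to `{0, …, k - 1}`, so that the right endpoint `t = k` lands in the last cell. -/
noncomputable def gridIndex (k : ℕ) (t : ℝ) : ℕ := min ⌊t⌋₊ (k - 1)

lemma gridIndex_lt {k : ℕ} (hk : 0 < k) (t : ℝ) : gridIndex k t < k :=
  lt_of_le_of_lt (min_le_right _ _) (Nat.sub_lt hk one_pos)

lemma gridIndex_mono (k : ℕ) : Monotone (gridIndex k) :=
  fun _ _ hst => min_le_min_right _ (Nat.floor_mono hst)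

lemma gridIndex_le_self {k : ℕ} {t : ℝ} (ht : 0 ≤ t) : (gridIndex k t : ℝ) ≤ t :=
  le_trans (by exact_mod_cast min_le_left _ _) (Nat.floor_le ht)

lemma le_gridIndex_add_one {k : ℕ} (hk : 0 < k) {t : ℝ} (ht : t ≤ k) :
    t ≤ gridIndex k t + 1 := by
  rcases le_total ⌊t⌋₊ (k - 1) with h | h
  · rw [gridIndex, min_eq_left h]
    exact (Nat.lt_floor_add_one t).le
  · rw [gridIndex, min_eq_right h, Nat.cast_pred hk, sub_add_cancel]
    exact ht

noncomputable def gridRound (a h : ℝ) (k : ℕ) (x : ℝ) : ℝ :=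
  a + h * (gridIndex k ((x - a) / h) + 1 / 2)

variable {a h : ℝ} {k : ℕ}

lemma gridRound_mono (hh : 0 ≤ h) : Monotone (gridRound a h k) := by
  intro x y hxy
  have hidx : gridIndex k ((x - a) / h) ≤ gridIndex k ((y - a) / h) :=
    gridIndex_mono k (div_le_div_of_nonneg_right (sub_le_sub_right hxy a) hh)
  unfold gridRound
  gcongr

lemma ncard_range_gridRound_comp_le {ι : Type*} (hk : 0 < k) (f : ι → ℝ) :
    (range (gridRound a h k ∘ f)).ncard ≤ k := by
  have hsub : range (gridRound a h k ∘ f) ⊆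
      ((Finset.range k).image fun n : ℕ => a + h * (n + 1 / 2) : Set ℝ) := by
    rintro _ ⟨x, rfl⟩
    simp only [Finset.coe_image, Finset.coe_range, mem_image, mem_Iio]
    exact ⟨_, gridIndex_lt hk _, rfl⟩
  calc (range (gridRound a h k ∘ f)).ncard
      ≤ ((Finset.range k).image fun n : ℕ => a + h * (n + 1 / 2)).card := by
        rw [← ncard_coe_finset]
        exact ncard_le_ncard hsub (Finset.finite_toSet _)
    _ ≤ k := Finset.card_image_le.trans (Finset.card_range k).le

lemma abs_sub_gridRound_le (hh : 0 ≤ h) (hk : 0 < k) {x : ℝ} (hx : x ∈ Icc a (a + k * h)) :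
    |x - gridRound a h k x| ≤ h / 2 := by
  rcases hh.eq_or_lt with rfl | hh
  · obtain rfl : x = a := by simpa using hx
    simp [gridRound]
  set t := (x - a) / h
  have hht : h * t = x - a := mul_div_cancel₀ _ hh.ne'
  have ht0 : 0 ≤ t := div_nonneg (sub_nonneg.2 hx.1) hh.le
  have htk : t ≤ k := (div_le_iff₀ hh).2 (by linarith [hx.2])
  have hlo := gridIndex_le_self (k := k) ht0
  have hhi := le_gridIndex_add_one hk htk
  have herr : x - gridRound a h k x = h * (t - (gridIndex k t + 1 / 2)) := by
    rw [gridRound, mul_sub, hht]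
    ring
  rw [herr, abs_mul, abs_of_pos hh]
  calc h * |t - (gridIndex k t + 1 / 2)| ≤ h * (1 / 2) := by
        gcongr
        exact abs_le.2 ⟨by linarith, by linarith⟩
    _ = h / 2 := by ring

lemma sqrt_sum_sq_le_sqrt_card_mul {ι : Type*} [Fintype ι] (f : ι → ℝ) {ε : ℝ} (hε : 0 ≤ ε)
    (hf : ∀ i, |f i| ≤ ε) : √(∑ i, f i ^ 2) ≤ √(Fintype.card ι) * ε := by
  have hsum : ∑ i, f i ^ 2 ≤ Fintype.card ι * ε ^ 2 := by
    calc ∑ i, f i ^ 2 ≤ ∑ _i : ι, ε ^ 2 :=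
          Finset.sum_le_sum fun i _ => sq_le_sq' (abs_le.1 (hf i)).1 (abs_le.1 (hf i)).2
      _ = Fintype.card ι * ε ^ 2 := by simp
  calc √(∑ i, f i ^ 2) ≤ √(Fintype.card ι * ε ^ 2) := Real.sqrt_le_sqrt hsum
    _ = √(Fintype.card ι) * ε := by rw [Real.sqrt_mul (Nat.cast_nonneg _), Real.sqrt_sq hε]

theorem stmt_19 {p : ℕ} (hp : 0 < p) (β : Fin p → ℝ) (hβ : Monotone β)
    (k : ℕ) (hk : 0 < k) :
    ∃ v : Fin p → ℝ, Monotone v ∧ (Set.range v).ncard ≤ k ∧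
      Real.sqrt (∑ i, (β i - v i) ^ 2) ≤
        Real.sqrt p * (β ⟨p - 1, by omega⟩ - β ⟨0, hp⟩) / (2 * k) := by
  set a := β ⟨0, hp⟩
  set b := β ⟨p - 1, by omega⟩
  have hab : ∀ i, β i ∈ Icc a b :=
    fun i => ⟨hβ (show (0 : ℕ) ≤ i from Nat.zero_le _), hβ (show (i : ℕ) ≤ p - 1 by omega)⟩
  set h := (b - a) / k
  have hh : 0 ≤ h := div_nonneg (sub_nonneg.2 (hab ⟨0, hp⟩).2) k.cast_nonneg
  have hkh : a + k * h = b := by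
    rw [mul_div_cancel₀ _ (Nat.cast_ne_zero.2 hk.ne')]
    ring
  refine ⟨gridRound a h k ∘ β, (gridRound_mono hh).comp hβ, ?_, ?_⟩
  · exact ncard_range_gridRound_comp_le hk β
  · calc √(∑ i, (β i - (gridRound a h k ∘ β) i) ^ 2) ≤ √(Fintype.card (Fin p)) * (h / 2) :=
          sqrt_sum_sq_le_sqrt_card_mul _ (by positivity)
            fun i => abs_sub_gridRound_le hh hk (hkh ▸ hab i)
      _ = √p * (b - a) / (2 * k) := by rw [Fintype.card_fin]; ring
end
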